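/- Let S be a finite semigroup, M⁰(G,n,m;P) a CS-diagonal finite regular Rees matrix semigroup, and ι : M⁰(G,n,m;P) → S an injective semigroup homomorphism whose image is an ideal of S. Let s ∈ S and suppose s·ι(g;α,β) = ι(g';α',β) and s·ι(h;γ,λ) = ι(h';γ',λ) for some g, g', h, h' ∈ G, rows α, α', γ, γ' and columns β, λ. If α' ~ γ', then α ~ γ. (This says the map induced by left multiplication by s on ~-classes, away from θ, is injective.) -/

import Mathlib

/-! Common definitions: Mal'cev nilpotency, the relations η_n, η, the congruence η*,
Rees matrix semigroups (with and without zero), regularity, CS-diagonality,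
the row relation ~, ideals, principal series and Rees factor isomorphisms. -/

/-- The pair `(λ_n, ρ_n)` of Mal'cev words in a monoid, with `λ₀ = x`, `ρ₀ = y`,
`λ_{k+1} = λ_k * z (k+1) * ρ_k` and `ρ_{k+1} = ρ_k * z (k+1) * λ_k`. -/
def malcev {M : Type*} [Monoid M] (x y : M) (z : ℕ → M) : ℕ → M × M
  | 0 => (x, y)
  | k + 1 =>
      ((malcev x y z k).1 * z (k + 1) * (malcev x y z k).2,
       (malcev x y z k).2 * z (k + 1) * (malcev x y z k).1)

/-- A semigroup `S` is Mal'cev nilpotent if for some positive `n`,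
`λ_n(a,b,c₁,…,c_n) = ρ_n(a,b,c₁,…,c_n)` for all `a b ∈ S` and all `cᵢ ∈ S¹`,
where `S¹ = WithOne S`. -/
def MalcevNilpotent (S : Type*) [Semigroup S] : Prop :=
  ∃ n : ℕ, 0 < n ∧ ∀ (a b : S) (z : ℕ → WithOne S),
    (malcev (a : WithOne S) (b : WithOne S) z n).1 =
    (malcev (a : WithOne S) (b : WithOne S) z n).2

/-- The relation `η_n` on a semigroup `S`: `η₁` is the diagonal, and for `n > 1`,
`x η_n y` iff there are `z₁, …, z_n ∈ S¹` with `x = λ_n(x,y,z₁,…,z_n)` and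
`y = ρ_n(x,y,z₁,…,z_n)`. -/
def etaN (S : Type*) [Semigroup S] (n : ℕ) (x y : S) : Prop :=
  (n = 1 ∧ x = y) ∨
  (1 < n ∧ ∃ z : ℕ → WithOne S,
    (x : WithOne S) = (malcev (x : WithOne S) (y : WithOne S) z n).1 ∧
    (y : WithOne S) = (malcev (x : WithOne S) (y : WithOne S) z n).2)

/-- `η`, the transitive closure of the union of the relations `η_n`, `n ≥ 1`. -/
def eta (S : Type*) [Semigroup S] : S → S → Prop :=
  Relation.TransGen (fun x y => ∃ n, 1 ≤ n ∧ etaN S n x y)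

/-- `η*`, the smallest congruence on `S` containing `η`. -/
def etaStar (S : Type*) [Semigroup S] : Con S :=
  conGen (eta S)

/-- A semigroup is an inverse semigroup if every element has exactly one inverse. -/
def IsInverseSemigroup (S : Type*) [Semigroup S] : Prop :=
  ∀ x : S, ∃! y : S, x * y * x = x ∧ y * x * y = y

/-- A semigroup is completely regular if every element lies in a subgroup:
for every `a` there is `b` with `aba = a`, `ab = ba` and `bab = b`. -/
def IsCompletelyRegular (S : Type*) [Semigroup S] : Prop :=
  ∀ a : S, ∃ b : S, a * b * a = a ∧ a * b = b * a ∧ b * a * b = b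

/-- A (possibly empty) two-sided ideal of a semigroup. -/
def IsIdeal (S : Type*) [Semigroup S] (I : Set S) : Prop :=
  ∀ s : S, ∀ x ∈ I, s * x ∈ I ∧ x * s ∈ I

/-- The Rees matrix semigroup `M⁰(G, n, m; P)` with zero `theta`; the sandwich
matrix entry `P j i : Option G` is `none` when the entry is `θ`. -/
inductive ReesMatrix (G : Type*) (n m : ℕ) (P : Fin m → Fin n → Option G) where
  | theta : ReesMatrix G n m P
  | elem (g : G) (i : Fin n) (j : Fin m) : ReesMatrix G n m P

namespace ReesMatrix

variable {G : Type*} [Group G] {n m : ℕ} {P : Fin m → Fin n → Option G}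

/-- Multiplication: `(g;i,j)(h;k,l) = (g p_{j,k} h; i, l)` if `p_{j,k} ≠ θ`,
and all other products are `θ`. -/
def mul : ReesMatrix G n m P → ReesMatrix G n m P → ReesMatrix G n m P
  | elem g i j, elem h k l =>
      match P j k with
      | some p => elem (g * p * h) i l
      | none => theta
  | _, _ => theta

instance : Semigroup (ReesMatrix G n m P) where
  mul := mul
  mul_assoc a b c := by
    show mul (mul a b) c = mul a (mul b c)
    rcases a with _ | ⟨g, i, j⟩ <;> rcases b with _ | ⟨h, k, l⟩ <;>
      rcases c with _ | ⟨f, r, s⟩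
    all_goals try rfl
    · rcases hjk : P j k with _ | p <;> simp [mul, hjk]
    · rcases hjk : P j k with _ | p <;> rcases hlr : P l r with _ | q <;>
        simp [mul, hjk, hlr, mul_assoc]

theorem mul_def (a b : ReesMatrix G n m P) : a * b = mul a b := rfl

instance [Finite G] : Finite (ReesMatrix G n m P) := by
  have := Fintype.ofFinite G
  exact Finite.of_surjective
    (fun x : Option (G × Fin n × Fin m) =>
      match x with
      | none => (theta : ReesMatrix G n m P)
      | some (g, i, j) => elem g i j)
    (by rintro (_ | ⟨g, i, j⟩)
        · exact ⟨none, rfl⟩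
        · exact ⟨some (g, i, j), rfl⟩)

end ReesMatrix

/-- `P` is regular: every row and every column of the sandwich matrix has a
nonzero entry. -/
def IsRegularSandwich {G : Type*} {n m : ℕ} (P : Fin m → Fin n → Option G) : Prop :=
  (∀ i : Fin n, ∃ j : Fin m, P j i ≠ none) ∧ (∀ j : Fin m, ∃ i : Fin n, P j i ≠ none)

/-- `P` is CS-diagonal: whenever `p_{r,t}`, `p_{r',t}` and `p_{r,t'}` are all
nonzero, so is `p_{r',t'}`. -/
def IsCSDiagonal {G : Type*} {n m : ℕ} (P : Fin m → Fin n → Option G) : Prop :=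
  ∀ (r r' : Fin m) (t t' : Fin n),
    P r t ≠ none → P r' t ≠ none → P r t' ≠ none → P r' t' ≠ none

/-- The relation `~` on rows: `i ~ i'` iff some column `j` has `p_{j,i} ≠ θ`
and `p_{j,i'} ≠ θ`. -/
def rowRel {G : Type*} {n m : ℕ} (P : Fin m → Fin n → Option G) (i i' : Fin n) : Prop :=
  ∃ j : Fin m, P j i ≠ none ∧ P j i' ≠ none

/-- The completely simple Rees matrix semigroup `M(G, n, m; P)` (without zero),
all sandwich entries lying in `G`. -/
inductive ReesMatrixCS (G : Type*) (n m : ℕ) (P : Fin m → Fin n → G) where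
  | elem (g : G) (i : Fin n) (j : Fin m) : ReesMatrixCS G n m P

namespace ReesMatrixCS

variable {G : Type*} [Group G] {n m : ℕ} {P : Fin m → Fin n → G}

instance : Semigroup (ReesMatrixCS G n m P) where
  mul a b := match a, b with
    | elem g i j, elem h k l => elem (g * P j k * h) i l
  mul_assoc a b c := by
    rcases a with ⟨g, i, j⟩; rcases b with ⟨h, k, l⟩; rcases c with ⟨f, r, s⟩
    show elem _ _ _ = elem _ _ _
    simp [mul_assoc]

instance [Finite G] : Finite (ReesMatrixCS G n m P) := by
  have := Fintype.ofFinite G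
  exact Finite.of_surjective
    (fun x : G × Fin n × Fin m => elem x.1 x.2.1 x.2.2)
    (by rintro ⟨g, i, j⟩; exact ⟨(g, i, j), rfl⟩)

end ReesMatrixCS

/-- A principal series of a finite semigroup `S`:
`S = C 1 ⊃ C 2 ⊃ … ⊃ C o ⊃ C (o+1) = ∅`, each `C p` an ideal of `S` with
no ideal of `S` strictly between consecutive terms. -/
structure PrincipalSeries (S : Type*) [Semigroup S] where
  o : ℕ
  ho : 1 ≤ o
  C : ℕ → Set S
  first : C 1 = Set.univ
  last : C (o + 1) = ∅
  isIdeal : ∀ p, 1 ≤ p → p ≤ o → IsIdeal S (C p)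
  strict : ∀ p, 1 ≤ p → p ≤ o → C (p + 1) ⊂ C p
  max : ∀ p, 1 ≤ p → p ≤ o → ∀ I : Set S, IsIdeal S I →
    C (p + 1) ⊆ I → I ⊆ C p → I = C (p + 1) ∨ I = C p

/-- `f` realises the Rees factor `A/B` (the Rees quotient of `A` by the ideal `B`;
if `B = ∅` the factor is `A` itself) as the Rees matrix semigroup with zero
`M⁰(H, n', m'; Q)`. -/
def IsReesFactorM0 {S : Type*} [Semigroup S] (A B : Set S)
    {H : Type*} [Group H] {n' m' : ℕ} (Q : Fin m' → Fin n' → Option H)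
    (f : S → ReesMatrix H n' m' Q) : Prop :=
  (∀ x ∈ A, ∀ y ∈ A, f (x * y) = f x * f y) ∧
  ((B = ∅ ∧ Set.BijOn f A Set.univ) ∨
   (B ≠ ∅ ∧ (∀ x ∈ B, f x = ReesMatrix.theta) ∧
     (∀ x ∈ A \ B, f x ≠ ReesMatrix.theta) ∧
     Set.InjOn f (A \ B) ∧
     (∀ w : ReesMatrix H n' m' Q, w ≠ ReesMatrix.theta → ∃ x ∈ A \ B, f x = w)))

/-- `f` realises `A` as the completely simple Rees matrix semigroup
`M(H, n', m'; Q)` (without zero). -/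
def IsReesFactorCS {S : Type*} [Semigroup S] (A : Set S)
    {H : Type*} [Group H] {n' m' : ℕ} (Q : Fin m' → Fin n' → H)
    (f : S → ReesMatrixCS H n' m' Q) : Prop :=
  (∀ x ∈ A, ∀ y ∈ A, f (x * y) = f x * f y) ∧ Set.BijOn f A Set.univ

/-! Fix a column `j` with `p_{j,α'}, p_{j,γ'} ≠ θ` and put `x = (1;α,j)`. Since the image of `ι`
is an ideal, `ι x · s = ι y` for some `y`, and injectivity of `ι` turns `s·ι(g;α,β) = ι(g';α',β)`
into `y·(g;α,β) = x·(g';α',β) ≠ θ`, and likewise `y·(h;γ,λ) ≠ θ`. Writing `y = (k;i,j₀)`, both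
products being nonzero says exactly that `p_{j₀,α}` and `p_{j₀,γ}` are nonzero. -/

namespace ReesMatrix

variable {G : Type*} [Group G] {n m : ℕ} {P : Fin m → Fin n → Option G}

@[simp]
theorem theta_mul (x : ReesMatrix G n m P) : theta * x = theta := rfl

theorem elem_mul_elem_ne_theta_iff (g h : G) (i k : Fin n) (j l : Fin m) :
    elem g i j * elem h k l ≠ (theta : ReesMatrix G n m P) ↔ P j k ≠ none := by
  rw [mul_def]
  rcases hjk : P j k with _ | p <;> simp [mul, hjk]

theorem rowRel_of_mul_elem_ne_theta {y : ReesMatrix G n m P} {a b : G} {i i' : Fin n}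
    {c c' : Fin m} (h : y * elem a i c ≠ theta) (h' : y * elem b i' c' ≠ theta) :
    rowRel P i i' := by
  rcases y with _ | ⟨k, i₀, j₀⟩
  · exact absurd (theta_mul _) h
  · exact ⟨j₀, (elem_mul_elem_ne_theta_iff ..).1 h, (elem_mul_elem_ne_theta_iff ..).1 h'⟩

end ReesMatrix

theorem MulHom.mul_eq_mul_of_map_mul_eq {M S : Type*} [Mul M] [Semigroup S]
    (ι : M →ₙ* S) (hinj : Function.Injective ι) {s : S} {x y a a' : M}
    (hy : ι y = ι x * s) (h : s * ι a = ι a') : y * a = x * a' :=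
  hinj <| by rw [map_mul, map_mul, hy, mul_assoc, h]

theorem minimal_representation_injective_general (S : Type*) [Semigroup S]
    (G : Type*) [Group G] (n m : ℕ) (P : Fin m → Fin n → Option G)
    (ι : ReesMatrix G n m P →ₙ* S) (hinj : Function.Injective ι)
    (hideal : IsIdeal S (Set.range ι))
    (s : S) (g g' h h' : G) (α α' γ γ' : Fin n) (β lam : Fin m)
    (h1 : s * ι (ReesMatrix.elem g α β) = ι (ReesMatrix.elem g' α' β))
    (h2 : s * ι (ReesMatrix.elem h γ lam) = ι (ReesMatrix.elem h' γ' lam))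
    (hα'γ' : rowRel P α' γ') : rowRel P α γ := by
  obtain ⟨j, hjα', hjγ'⟩ := hα'γ'
  obtain ⟨y, hy⟩ := (hideal s (ι (.elem 1 α j)) ⟨_, rfl⟩).2
  have hβ : y * .elem g α β ≠ .theta := by
    rw [ι.mul_eq_mul_of_map_mul_eq hinj hy h1, ReesMatrix.elem_mul_elem_ne_theta_iff]
    exact hjα'
  have hlam : y * .elem h γ lam ≠ .theta := by
    rw [ι.mul_eq_mul_of_map_mul_eq hinj hy h2, ReesMatrix.elem_mul_elem_ne_theta_iff]
    exact hjγ'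
  exact ReesMatrix.rowRel_of_mul_elem_ne_theta hβ hlam

/-- injectivity of the minimal non-nilpotent representation on
`~`-classes: if left multiplication by `s ∈ S` sends rows `α, γ` to
`~`-related rows `α', γ'`, then `α ~ γ`. -/
theorem minimal_representation_injective (S : Type*) [Semigroup S] [Finite S]
    (G : Type*) [Group G] [Finite G] (n m : ℕ) (P : Fin m → Fin n → Option G)
    (hreg : IsRegularSandwich P) (hdiag : IsCSDiagonal P)
    (ι : ReesMatrix G n m P →ₙ* S) (hinj : Function.Injective ι)
    (hideal : IsIdeal S (Set.range ι))
    (s : S) (g g' h h' : G) (α α' γ γ' : Fin n) (β lam : Fin m)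
    (h1 : s * ι (ReesMatrix.elem g α β) = ι (ReesMatrix.elem g' α' β))
    (h2 : s * ι (ReesMatrix.elem h γ lam) = ι (ReesMatrix.elem h' γ' lam))
    (hα'γ' : rowRel P α' γ') : rowRel P α γ :=
  minimal_representation_injective_general S G n m P ι hinj hideal s g g' h h' α α' γ γ' β lam h1 h2
    hα'γ'
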